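/- arXiv:2601.19511 — 6 statements merged into one kernel-verified Lean document; each statement's English description precedes it below -/
import Mathlib

section
/- Let I be a nonempty index set and for each α ∈ I let 𝒞_α ⊆ 𝒳 be 𝒫-sensitive with reduction set 𝒬_α ⊆ 𝔓_c(Ω). Then the intersection 𝒞 := ⋂_{α ∈ I} 𝒞_α is 𝒫-sensitive with reduction set 𝒬 := ⋃_{α ∈ I} 𝒬_α. -/
open MeasureTheory Filter Set

variable {Ω : Type*} [MeasurableSpace Ω]

/-- Quasi-sure equality with respect to a family of measures. -/
def QSEq (𝔓 : Set (Measure Ω)) (x y : Ω → ℝ) : Prop := ∀ P ∈ 𝔓, x =ᵐ[P] y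

def qsSetoid (𝔓 : Set (Measure Ω)) : Setoid (Ω → ℝ) where
  r := QSEq 𝔓
  iseqv := ⟨fun _ _ _ => EventuallyEq.refl _ _,
    fun h P hP => (h P hP).symm,
    fun h1 h2 P hP => (h1 P hP).trans (h2 P hP)⟩

/-- The robust space `L⁰_c`. -/
def L0c (𝔓 : Set (Measure Ω)) := Quotient (qsSetoid 𝔓)

def aeSetoid (Q : Measure Ω) : Setoid (Ω → ℝ) where
  r x y := x =ᵐ[Q] y
  iseqv := ⟨fun _ => EventuallyEq.refl _ _, EventuallyEq.symm, EventuallyEq.trans⟩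

/-- The space `L⁰_Q` for a single measure. -/
def L0 (Q : Measure Ω) := Quotient (aeSetoid Q)

/-- Probability measures dominated by the family `𝔓` (vanishing on `𝔓`-polar sets). -/
def Pc (𝔓 : Set (Measure Ω)) : Set (Measure Ω) :=
  {Q | IsProbabilityMeasure Q ∧ ∀ N : Set Ω, (∀ P ∈ 𝔓, P N = 0) → Q N = 0}

abbrev PcM (𝔓 : Set (Measure Ω)) := {Q : Measure Ω // Q ∈ Pc 𝔓}

theorem QSEq.aeEq {𝔓 : Set (Measure Ω)} (Q : PcM 𝔓) {x y : Ω → ℝ}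
    (h : QSEq 𝔓 x y) : x =ᵐ[Q.1] y :=
  ae_iff.2 (Q.2.2 _ fun P hP => ae_iff.1 (h P hP))

/-- The map `j_Q : L⁰_c → L⁰_Q`. -/
def jQ {𝔓 : Set (Measure Ω)} (Q : PcM 𝔓) : L0c 𝔓 → L0 Q.1 :=
  Quotient.lift (fun x => Quotient.mk (aeSetoid Q.1) x)
    (fun _ _ h => Quotient.sound (h.aeEq Q))

/-- The `𝔓`-quasi-sure order on `L⁰_c`. -/
def qsLe {𝔓 : Set (Measure Ω)} : L0c 𝔓 → L0c 𝔓 → Prop :=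
  Quotient.lift₂ (fun x y => ∀ P ∈ 𝔓, x ≤ᵐ[P] y)
    (fun _ _ _ _ ha hb => propext
      ⟨fun h P hP => ((ha P hP).symm.le.trans (h P hP)).trans (hb P hP).le,
       fun h P hP => ((ha P hP).le.trans (h P hP)).trans (hb P hP).symm.le⟩)

/-- The `Q`-a.s. order on `L⁰_c`, for `Q ∈ 𝔓_c(Ω)`. -/
def qLe {𝔓 : Set (Measure Ω)} (Q : PcM 𝔓) : L0c 𝔓 → L0c 𝔓 → Prop :=
  Quotient.lift₂ (fun x y => x ≤ᵐ[Q.1] y)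
    (fun _ _ _ _ ha hb => propext
      ⟨fun h => (((ha.aeEq Q).symm.le.trans h)).trans (hb.aeEq Q).le,
       fun h => (((ha.aeEq Q).le.trans h)).trans (hb.aeEq Q).symm.le⟩)

def L0c.add {𝔓 : Set (Measure Ω)} : L0c 𝔓 → L0c 𝔓 → L0c 𝔓 :=
  Quotient.map₂ (fun x y ω => x ω + y ω)
    (fun _ _ ha _ _ hb P hP => by filter_upwards [ha P hP, hb P hP] with ω h1 h2; simp [h1, h2])

def L0c.const (𝔓 : Set (Measure Ω)) (m : ℝ) : L0c 𝔓 := Quotient.mk (qsSetoid 𝔓) (fun _ => m)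

def L0c.smul {𝔓 : Set (Measure Ω)} (c : ℝ) : L0c 𝔓 → L0c 𝔓 :=
  Quotient.map (fun x ω => c * x ω)
    (fun _ _ ha P hP => by filter_upwards [ha P hP] with ω h1; simp [h1])

def L0c.abs {𝔓 : Set (Measure Ω)} : L0c 𝔓 → L0c 𝔓 :=
  Quotient.map (fun x ω => |x ω|)
    (fun _ _ ha P hP => by filter_upwards [ha P hP] with ω h1; simp [h1])

/-- Multiplication by the indicator of a set `A`. -/
noncomputable def L0c.mulInd {𝔓 : Set (Measure Ω)} (A : Set Ω) : L0c 𝔓 → L0c 𝔓 :=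
  Quotient.map (fun x => A.indicator x)
    (fun _ _ ha P hP => by
      filter_upwards [ha P hP] with ω h1
      by_cases h : ω ∈ A <;> simp [Set.indicator, h, h1])

/-- The class of the indicator function of `A`. -/
noncomputable def L0c.ind (𝔓 : Set (Measure Ω)) (A : Set Ω) : L0c 𝔓 :=
  Quotient.mk (qsSetoid 𝔓) (A.indicator fun _ => (1 : ℝ))

/-- The bounded elements: `L^∞_c`. -/
def Linftyc (𝔓 : Set (Measure Ω)) : Set (L0c 𝔓) :=
  {X | ∃ m : ℝ, 0 < m ∧ qsLe X.abs (L0c.const 𝔓 m)}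

/-- Expectation under `R ∈ 𝔓_c(Ω)`. -/
noncomputable def expct {𝔓 : Set (Measure Ω)} (R : PcM 𝔓) : L0c 𝔓 → ℝ :=
  Quotient.lift (fun x => integral R.1 (fun ω => x ω))
    (fun _ _ h => integral_congr_ae (h.aeEq R))

/-- `𝒬` is a reduction set for `𝒞 ⊆ 𝒳`. -/
def IsReductionSet (𝔓 : Set (Measure Ω)) (𝒳 𝒞 : Set (L0c 𝔓)) (𝒬 : Set (PcM 𝔓)) : Prop :=
  𝒬.Nonempty ∧ ∀ X ∈ 𝒳, (X ∈ 𝒞 ↔ ∀ Q ∈ 𝒬, jQ Q X ∈ jQ Q '' 𝒞)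

/-- `𝒞 ⊆ 𝒳` is `𝔓`-sensitive. -/
def PSensitive (𝔓 : Set (Measure Ω)) (𝒳 𝒞 : Set (L0c 𝔓)) : Prop :=
  𝒞 = ∅ ∨ ∀ X ∈ 𝒳, (X ∈ 𝒞 ↔ ∀ Q : PcM 𝔓, jQ Q X ∈ jQ Q '' 𝒞)

section ReductionSet

variable {𝔓 : Set (Measure Ω)} {𝒳 : Set (L0c 𝔓)}

theorem IsReductionSet.pSensitive {𝒞 : Set (L0c 𝔓)} {𝒬 : Set (PcM 𝔓)}
    (h : IsReductionSet 𝔓 𝒳 𝒞 𝒬) : PSensitive 𝔓 𝒳 𝒞 :=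
  Or.inr fun X hX =>
    ⟨fun hX𝒞 _ => mem_image_of_mem _ hX𝒞, fun hall => (h.2 X hX).2 fun Q _ => hall Q⟩

theorem IsReductionSet.iInter {I : Type*} [Nonempty I] {𝒞 : I → Set (L0c 𝔓)}
    {𝒬 : I → Set (PcM 𝔓)} (h : ∀ α, IsReductionSet 𝔓 𝒳 (𝒞 α) (𝒬 α)) :
    IsReductionSet 𝔓 𝒳 (⋂ α, 𝒞 α) (⋃ α, 𝒬 α) := by
  obtain ⟨α⟩ := ‹Nonempty I›
  refine ⟨(h α).1.mono (subset_iUnion 𝒬 α), fun X hX => ⟨?_, fun hall => ?_⟩⟩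
  · exact fun hX𝒞 _ _ => mem_image_of_mem _ hX𝒞
  · refine mem_iInter.2 fun β => ((h β).2 X hX).2 fun Q hQ => ?_
    exact image_mono (iInter_subset 𝒞 β) (hall Q (mem_iUnion_of_mem β hQ))

end ReductionSet

theorem inter_pSensitive_general {Ω : Type*} [MeasurableSpace Ω]
    (𝔓 : Set (Measure Ω))
    (𝒳 : Set (L0c 𝔓))
    (I : Type*) [Nonempty I] (𝒞 : I → Set (L0c 𝔓))
    (𝒬 : I → Set (PcM 𝔓)) (hred : ∀ α, IsReductionSet 𝔓 𝒳 (𝒞 α) (𝒬 α)) :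
    PSensitive 𝔓 𝒳 (⋂ α, 𝒞 α) ∧ IsReductionSet 𝔓 𝒳 (⋂ α, 𝒞 α) (⋃ α, 𝒬 α) :=
  ⟨(IsReductionSet.iInter hred).pSensitive, IsReductionSet.iInter hred⟩

theorem inter_pSensitive {Ω : Type*} [MeasurableSpace Ω]
    (𝔓 : Set (Measure Ω)) (h𝔓 : 𝔓.Nonempty) (hprob : ∀ P ∈ 𝔓, IsProbabilityMeasure P)
    (𝒳 : Set (L0c 𝔓)) (h𝒳 : 𝒳.Nonempty)
    (I : Type*) [Nonempty I] (𝒞 : I → Set (L0c 𝔓)) (h𝒞𝒳 : ∀ α, 𝒞 α ⊆ 𝒳)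
    (hsens : ∀ α, PSensitive 𝔓 𝒳 (𝒞 α))
    (𝒬 : I → Set (PcM 𝔓)) (hred : ∀ α, IsReductionSet 𝔓 𝒳 (𝒞 α) (𝒬 α)) :
    PSensitive 𝔓 𝒳 (⋂ α, 𝒞 α) ∧ IsReductionSet 𝔓 𝒳 (⋂ α, 𝒞 α) (⋃ α, 𝒬 α) :=
  inter_pSensitive_general 𝔓 𝒳 I 𝒞 𝒬 hred
end

section
/- A set 𝒞 ⊆ 𝒳 is 𝒫-sensitive with reduction set 𝒬 if and only if 𝒞 is 𝒬-stable, i.e., 𝒞 contains every X ∈ 𝒳 for which there exists a family (X^Q)_{Q∈𝒬} ⊆ 𝒞 with j_Q(X) = j_Q(X^Q) for all Q ∈ 𝒬. -/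
open MeasureTheory Filter Set

variable {Ω : Type*} [MeasurableSpace Ω]

/-- `𝒞` is `𝒬`-stable in `𝒳`: it contains every aggregator in `𝒳` of every
`𝒬`-coherent family of members of `𝒞`. -/
def QStable (𝔓 : Set (Measure Ω)) (𝒳 𝒞 : Set (L0c 𝔓)) (𝒬 : Set (PcM 𝔓)) : Prop :=
  ∀ X ∈ 𝒳,
    (∃ XQ : PcM 𝔓 → L0c 𝔓, (∀ Q ∈ 𝒬, XQ Q ∈ 𝒞) ∧ ∀ Q ∈ 𝒬, jQ Q X = jQ Q (XQ Q)) →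
    X ∈ 𝒞

theorem exists_family_mem_and_eq_iff {ι α : Type*} {β : ι → Type*} (j : ∀ i, α → β i)
    (s : Set ι) (C : Set α) (x : α) :
    (∃ f : ι → α, (∀ i ∈ s, f i ∈ C) ∧ ∀ i ∈ s, j i x = j i (f i)) ↔
      ∀ i ∈ s, j i x ∈ j i '' C := by
  refine ⟨fun ⟨f, hfC, hfj⟩ i hi => ⟨f i, hfC i hi, (hfj i hi).symm⟩, fun h => ?_⟩
  choose y hyC hyj using h
  classical
  refine ⟨fun i => if hi : i ∈ s then y i hi else x, fun i hi => ?_, fun i hi => ?_⟩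
  · simpa [hi] using hyC i hi
  · simpa [hi] using (hyj i hi).symm

theorem reduction_iff_stable_general {Ω : Type*} [MeasurableSpace Ω]
    (𝔓 : Set (Measure Ω))
    (𝒳 : Set (L0c 𝔓)) (𝒞 : Set (L0c 𝔓))
    (𝒬 : Set (PcM 𝔓)) (h𝒬 : 𝒬.Nonempty) :
    IsReductionSet 𝔓 𝒳 𝒞 𝒬 ↔ QStable 𝔓 𝒳 𝒞 𝒬 := by
  rw [IsReductionSet, QStable, and_iff_right h𝒬]
  simp only [exists_family_mem_and_eq_iff jQ]
  refine forall₂_congr fun X _ => ⟨fun h => h.2, fun h => ⟨?_, h⟩⟩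
  exact fun hX Q _ => mem_image_of_mem _ hX

theorem reduction_iff_stable {Ω : Type*} [MeasurableSpace Ω]
    (𝔓 : Set (Measure Ω)) (h𝔓 : 𝔓.Nonempty) (hprob : ∀ P ∈ 𝔓, IsProbabilityMeasure P)
    (𝒳 : Set (L0c 𝔓)) (h𝒳 : 𝒳.Nonempty) (𝒞 : Set (L0c 𝔓)) (h𝒞𝒳 : 𝒞 ⊆ 𝒳)
    (𝒬 : Set (PcM 𝔓)) (h𝒬 : 𝒬.Nonempty) :
    IsReductionSet 𝔓 𝒳 𝒞 𝒬 ↔ QStable 𝔓 𝒳 𝒞 𝒬 :=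
  reduction_iff_stable_general 𝔓 𝒳 𝒞 𝒬 h𝒬
end

section
/- A function f : 𝒳 → [-∞,∞] admits a 𝒬-localization (a 𝒬-consistent family (f^Q)_{Q∈𝒬} with f = sup_{Q∈𝒬} f^Q) if and only if f is 𝒫-sensitive with reduction set 𝒬. In that case f = f^𝒬_E, where f^𝒬_E(X) := sup_{Q∈𝒬} inf{f(Y) : Y ∈ 𝒳, j_Q(Y)=j_Q(X)}. -/
open MeasureTheory Filter Set

variable {Ω : Type*} [MeasurableSpace Ω]

/-! Only the fibres of the maps `j Q` matter, so the statement is pure order theory: a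
consistent family bounds `f` on each fibre by its value on any point of the fibre, which gives
sensitivity; conversely the fibrewise infima form a consistent family whose supremum is `f`,
because a real level strictly between the supremum and `f X` would be reached by `f` on every
fibre of `X`, hence by `f X` itself. -/

section Fiberwise

variable {α ι : Type*} {β : ι → Type*} (j : ∀ i, α → β i) (𝒳 : Set α) (𝒬 : Set ι)
  (f : α → EReal)

noncomputable def fiberInf (i : ι) (X : α) : EReal :=
  ⨅ Y ∈ {Y | Y ∈ 𝒳 ∧ j i Y = j i X}, f Y

/-- `𝒫`-sensitivity with reduction set `𝒬`, for arbitrary maps `j i` in place of `j_Q`. -/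
def IsFiberSensitive : Prop :=
  ∀ r : ℝ, ∀ X ∈ 𝒳, (f X ≤ (r : EReal) ↔ ∀ i ∈ 𝒬, ∃ Y ∈ 𝒳, f Y ≤ (r : EReal) ∧ j i Y = j i X)

variable {j 𝒳 𝒬 f}

theorem fiberInf_congr {i : ι} {X Y : α} (h : j i X = j i Y) :
    fiberInf j 𝒳 f i X = fiberInf j 𝒳 f i Y := by
  simp only [fiberInf, h]

theorem iSup_fiberInf_le {X : α} (hX : X ∈ 𝒳) : ⨆ i ∈ 𝒬, fiberInf j 𝒳 f i X ≤ f X :=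
  iSup₂_le fun _ _ => iInf₂_le X ⟨hX, rfl⟩

theorem IsFiberSensitive.le_iSup_fiberInf (hf : IsFiberSensitive j 𝒳 𝒬 f) {X : α} (hX : X ∈ 𝒳) :
    f X ≤ ⨆ i ∈ 𝒬, fiberInf j 𝒳 f i X := by
  by_contra! hlt
  obtain ⟨r, hr_sup, hr_f⟩ := EReal.exists_between_coe_real hlt
  refine hr_f.not_ge ((hf r X hX).2 fun i hi => ?_)
  have hi_lt : fiberInf j 𝒳 f i X < r :=
    (le_iSup₂ (f := fun i _ => fiberInf j 𝒳 f i X) i hi).trans_lt hr_sup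
  obtain ⟨Y, hY⟩ := iInf_lt_iff.1 hi_lt
  obtain ⟨⟨hY𝒳, hYX⟩, hYr⟩ := iInf_lt_iff.1 hY
  exact ⟨Y, hY𝒳, hYr.le, hYX⟩

theorem IsFiberSensitive.eq_iSup_fiberInf (hf : IsFiberSensitive j 𝒳 𝒬 f) {X : α} (hX : X ∈ 𝒳) :
    f X = ⨆ i ∈ 𝒬, fiberInf j 𝒳 f i X :=
  (hf.le_iSup_fiberInf hX).antisymm (iSup_fiberInf_le hX)

theorem isFiberSensitive_of_eq_iSup {g : ι → α → EReal}
    (hg : ∀ i ∈ 𝒬, ∀ X ∈ 𝒳, ∀ Y ∈ 𝒳, j i X = j i Y → g i X = g i Y)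
    (hfg : ∀ X ∈ 𝒳, f X = ⨆ i ∈ 𝒬, g i X) : IsFiberSensitive j 𝒳 𝒬 f := by
  refine fun r X hX => ⟨fun h _ _ => ⟨X, hX, h, rfl⟩, fun h => ?_⟩
  rw [hfg X hX]
  refine iSup₂_le fun i hi => ?_
  obtain ⟨Y, hY𝒳, hYr, hYX⟩ := h i hi
  calc g i X = g i Y := hg i hi X hX Y hY𝒳 hYX.symm
    _ ≤ ⨆ i ∈ 𝒬, g i Y := le_iSup₂ (f := fun i _ => g i Y) i hi
    _ = f Y := (hfg Y hY𝒳).symm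
    _ ≤ r := hYr

end Fiberwise

theorem localization_iff_pSensitive_general {Ω : Type*} [MeasurableSpace Ω]
    (𝔓 : Set (Measure Ω))
    (𝒳 : Set (L0c 𝔓))
    (𝒬 : Set (PcM 𝔓)) (f : L0c 𝔓 → EReal) :
    ((∃ g : PcM 𝔓 → L0c 𝔓 → EReal,
        (∀ Q ∈ 𝒬, ∀ X ∈ 𝒳, ∀ Y ∈ 𝒳, jQ Q X = jQ Q Y → g Q X = g Q Y) ∧
        (∀ X ∈ 𝒳, f X = ⨆ Q ∈ 𝒬, g Q X)) ↔
      (∀ r : ℝ, ∀ X ∈ 𝒳,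
        (f X ≤ (r : EReal) ↔
          ∀ Q ∈ 𝒬, ∃ Y ∈ 𝒳, f Y ≤ (r : EReal) ∧ jQ Q Y = jQ Q X))) ∧
    ((∀ r : ℝ, ∀ X ∈ 𝒳,
        (f X ≤ (r : EReal) ↔
          ∀ Q ∈ 𝒬, ∃ Y ∈ 𝒳, f Y ≤ (r : EReal) ∧ jQ Q Y = jQ Q X)) →
      ∀ X ∈ 𝒳, f X = ⨆ Q ∈ 𝒬, ⨅ Y ∈ {Y | Y ∈ 𝒳 ∧ jQ Q Y = jQ Q X}, f Y) := by
  have h_repr : IsFiberSensitive (fun Q => jQ Q) 𝒳 𝒬 f →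
      ∀ X ∈ 𝒳, f X = ⨆ Q ∈ 𝒬, fiberInf (fun Q => jQ Q) 𝒳 f Q X :=
    fun hf _ hX => hf.eq_iSup_fiberInf hX
  exact ⟨⟨fun ⟨g, hg, hfg⟩ => isFiberSensitive_of_eq_iSup hg hfg,
    fun hf => ⟨fiberInf (fun Q => jQ Q) 𝒳 f, fun _ _ _ _ _ _ h => fiberInf_congr h, h_repr hf⟩⟩,
    h_repr⟩

theorem localization_iff_pSensitive {Ω : Type*} [MeasurableSpace Ω]
    (𝔓 : Set (Measure Ω)) (h𝔓 : 𝔓.Nonempty) (hprob : ∀ P ∈ 𝔓, IsProbabilityMeasure P)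
    (𝒳 : Set (L0c 𝔓)) (h𝒳 : 𝒳.Nonempty)
    (𝒬 : Set (PcM 𝔓)) (h𝒬 : 𝒬.Nonempty) (f : L0c 𝔓 → EReal) :
    ((∃ g : PcM 𝔓 → L0c 𝔓 → EReal,
        (∀ Q ∈ 𝒬, ∀ X ∈ 𝒳, ∀ Y ∈ 𝒳, jQ Q X = jQ Q Y → g Q X = g Q Y) ∧
        (∀ X ∈ 𝒳, f X = ⨆ Q ∈ 𝒬, g Q X)) ↔
      (∀ r : ℝ, ∀ X ∈ 𝒳,
        (f X ≤ (r : EReal) ↔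
          ∀ Q ∈ 𝒬, ∃ Y ∈ 𝒳, f Y ≤ (r : EReal) ∧ jQ Q Y = jQ Q X))) ∧
    ((∀ r : ℝ, ∀ X ∈ 𝒳,
        (f X ≤ (r : EReal) ↔
          ∀ Q ∈ 𝒬, ∃ Y ∈ 𝒳, f Y ≤ (r : EReal) ∧ jQ Q Y = jQ Q X)) →
      ∀ X ∈ 𝒳, f X = ⨆ Q ∈ 𝒬, ⨅ Y ∈ {Y | Y ∈ 𝒳 ∧ jQ Q Y = jQ Q X}, f Y) :=
  localization_iff_pSensitive_general 𝔓 𝒳 𝒬 f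
end

section
/- Let 𝒳 = L⁰_c be Dedekind complete and 𝒬 ⊆ 𝔓_c(Ω) nonempty with every Q ∈ 𝒬 supported with support S(Q). If a family (X^Q)_{Q∈𝒬} ⊆ 𝒳 is pairwise 𝒬-coherent (X^Q 𝟙_{S(Q)∩S(Q')} = X^{Q'} 𝟙_{S(Q)∩S(Q')} for all Q,Q' ∈ 𝒬) and bounded (there is Y ∈ 𝒳 with |X^Q| 𝟙_{S(Q)} ≼ Y for all Q), then there exists X ∈ 𝒳 with j_Q(X) = j_Q(X^Q) for all Q ∈ 𝒬. -/
open MeasureTheory Filter Set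

variable {Ω : Type*} [MeasurableSpace Ω]

/-- `S` is an (order) support of `Q ∈ 𝔓_c(Ω)`. -/
def IsSupport (𝔓 : Set (Measure Ω)) (Q : PcM 𝔓) (S : Set Ω) : Prop :=
  MeasurableSet S ∧ Q.1 Sᶜ = 0 ∧ ∀ N : Set Ω, Q.1 N = 0 → ∀ P ∈ 𝔓, P (N ∩ S) = 0

/-! The element `ℓ := sup_Q Z^Q`, where `Z^Q` is `X^Q` on `S(Q)` and `-|Y|` off it, aggregates the
family. The bound `Y` makes the supremum exist; `Z^Q ≤ ℓ` gives `X^Q ≤ ℓ` on `S(Q)`. Conversely the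
element that is `X^Q` on `S(Q)` and `ℓ` off it dominates every `Z^{Q'}`, by coherence on
`S(Q) ∩ S(Q')` and by `-|Y| ≤ X^Q` on `S(Q) \ S(Q')`, so `ℓ ≤ X^Q` on `S(Q)`. As `Q(S(Q)ᶜ) = 0`,
`ℓ = X^Q` `Q`-a.s. -/

section

variable {α : Type*} {S S' : Set α} [DecidablePred (· ∈ S)] {x x' y ℓ : α → ℝ} {a : α}

theorem piecewise_le_of_indicator_abs_le (h : S.indicator (fun a => |x a|) a ≤ y a) :
    S.piecewise x (fun a => -|y a|) a ≤ y a := by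
  by_cases ha : a ∈ S
  · rw [piecewise_eq_of_mem _ _ _ ha]
    rw [indicator_of_mem ha] at h
    exact (le_abs_self _).trans h
  · rw [piecewise_eq_of_notMem _ _ _ ha]
    exact neg_abs_le _

theorem piecewise_le_piecewise_of_indicator_eq [DecidablePred (· ∈ S')]
    (hcoh : (S ∩ S').indicator x a = (S ∩ S').indicator x' a)
    (hbd : S'.indicator (fun a => |x' a|) a ≤ y a)
    (hℓ : S.piecewise x (fun a => -|y a|) a ≤ ℓ a) :
    S.piecewise x (fun a => -|y a|) a ≤ S'.piecewise x' ℓ a := by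
  by_cases h' : a ∈ S'
  · rw [piecewise_eq_of_mem _ _ _ h']
    by_cases h : a ∈ S
    · rw [piecewise_eq_of_mem _ _ _ h]
      simp only [indicator_of_mem (mem_inter h h')] at hcoh
      exact hcoh.le
    · rw [piecewise_eq_of_notMem _ _ _ h]
      rw [indicator_of_mem h'] at hbd
      linarith [neg_abs_le (x' a), le_abs_self (y a)]
  · rw [piecewise_eq_of_notMem _ _ _ h']
    exact hℓ

end

def QSLe (𝔓 : Set (Measure Ω)) (x y : Ω → ℝ) : Prop := ∀ P ∈ 𝔓, x ≤ᵐ[P] y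

def L0c.DedekindComplete (𝔓 : Set (Measure Ω)) : Prop :=
  ∀ D : Set (L0c 𝔓), D.Nonempty → (∃ b, ∀ x ∈ D, qsLe x b) →
    ∃ l, (∀ x ∈ D, qsLe x l) ∧ ∀ u, (∀ x ∈ D, qsLe x u) → qsLe l u

section

variable {𝔓 : Set (Measure Ω)}

theorem QSLe.ae_le (Q : PcM 𝔓) {x y : Ω → ℝ} (h : QSLe 𝔓 x y) : x ≤ᵐ[Q.1] y :=
  ae_iff.2 (Q.2.2 _ fun P hP => ae_iff.1 (h P hP))

theorem L0c.qsLe_mk_iff_qsLe_out {x : Ω → ℝ} {Y : L0c 𝔓} :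
    qsLe (Quotient.mk (qsSetoid 𝔓) x) Y ↔ QSLe 𝔓 x Y.out := by
  conv_lhs => rw [← Quotient.out_eq Y]
  rfl

theorem L0c.mulInd_eq_mk_indicator_out (A : Set Ω) (X : L0c 𝔓) :
    X.mulInd A = Quotient.mk (qsSetoid 𝔓) (A.indicator X.out) := by
  conv_lhs => rw [← Quotient.out_eq X]
  rfl

theorem L0c.mulInd_eq_mulInd_iff {A : Set Ω} {X X' : L0c 𝔓} :
    X.mulInd A = X'.mulInd A ↔ QSEq 𝔓 (A.indicator X.out) (A.indicator X'.out) := by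
  rw [L0c.mulInd_eq_mk_indicator_out, L0c.mulInd_eq_mk_indicator_out]
  exact Quotient.eq

theorem L0c.mulInd_abs_eq_mk_indicator_abs_out (A : Set Ω) (X : L0c 𝔓) :
    X.abs.mulInd A = Quotient.mk (qsSetoid 𝔓) (A.indicator fun ω => |X.out ω|) := by
  conv_lhs => rw [← Quotient.out_eq X]
  rfl

theorem L0c.DedekindComplete.exists_qsLub (hDC : L0c.DedekindComplete 𝔓) {ι : Type*} {s : Set ι}
    (hs : s.Nonempty) (f : ι → Ω → ℝ) {g : Ω → ℝ} (hg : ∀ i ∈ s, QSLe 𝔓 (f i) g) :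
    ∃ ℓ : Ω → ℝ, (∀ i ∈ s, QSLe 𝔓 (f i) ℓ) ∧ ∀ u, (∀ i ∈ s, QSLe 𝔓 (f i) u) → QSLe 𝔓 ℓ u := by
  obtain ⟨l, hl, hl_least⟩ := hDC ((fun i => Quotient.mk (qsSetoid 𝔓) (f i)) '' s) (hs.image _)
    ⟨Quotient.mk _ g, forall_mem_image.2 hg⟩
  refine ⟨l.out, fun i hi => L0c.qsLe_mk_iff_qsLe_out.1 (hl _ (mem_image_of_mem _ hi)),
    fun u hu => ?_⟩
  have h := hl_least (Quotient.mk _ u) (forall_mem_image.2 hu)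
  rw [← Quotient.out_eq l] at h
  exact h

end

open scoped Classical in
theorem exists_ae_eq_of_pairwise_coherent {𝔓 : Set (Measure Ω)} (hDC : L0c.DedekindComplete 𝔓)
    {𝒬 : Set (PcM 𝔓)} (h𝒬 : 𝒬.Nonempty) {S : PcM 𝔓 → Set Ω} (hS : ∀ Q ∈ 𝒬, Q.1 (S Q)ᶜ = 0)
    {x : PcM 𝔓 → Ω → ℝ} {y : Ω → ℝ}
    (hcoh : ∀ Q ∈ 𝒬, ∀ Q' ∈ 𝒬,
      QSEq 𝔓 ((S Q ∩ S Q').indicator (x Q)) ((S Q ∩ S Q').indicator (x Q')))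
    (hbd : ∀ Q ∈ 𝒬, QSLe 𝔓 ((S Q).indicator fun ω => |x Q ω|) y) :
    ∃ ℓ : Ω → ℝ, ∀ Q ∈ 𝒬, ℓ =ᵐ[Q.1] x Q := by
  obtain ⟨ℓ, hzℓ, hℓ_least⟩ := hDC.exists_qsLub h𝒬 (fun Q => (S Q).piecewise (x Q) fun ω => -|y ω|)
    (g := y) fun Q hQ P hP => by
      filter_upwards [hbd Q hQ P hP] with ω h using piecewise_le_of_indicator_abs_le h
  refine ⟨ℓ, fun Q hQ => ?_⟩
  have hℓ_le : QSLe 𝔓 ℓ ((S Q).piecewise (x Q) ℓ) := hℓ_least _ fun Q' hQ' P hP => by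
    filter_upwards [hcoh Q' hQ' Q hQ P hP, hbd Q hQ P hP, hzℓ Q' hQ' P hP] with ω h1 h2 h3
    exact piecewise_le_piecewise_of_indicator_eq h1 h2 h3
  filter_upwards [hℓ_le.ae_le Q, (hzℓ Q hQ).ae_le Q, mem_ae_iff.2 (hS Q hQ)] with ω h1 h2 hω
  rw [piecewise_eq_of_mem _ _ _ hω] at h1 h2
  exact le_antisymm h1 h2

theorem pairwise_coherent_aggregation_general {Ω : Type*} [MeasurableSpace Ω]
    (𝔓 : Set (Measure Ω))
    (hDC : ∀ D : Set (L0c 𝔓), D.Nonempty → (∃ b, ∀ x ∈ D, qsLe x b) →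
      ∃ l, (∀ x ∈ D, qsLe x l) ∧ ∀ u, (∀ x ∈ D, qsLe x u) → qsLe l u)
    (𝒬 : Set (PcM 𝔓)) (h𝒬 : 𝒬.Nonempty)
    (Ssupp : PcM 𝔓 → Set Ω) (hsupp : ∀ Q ∈ 𝒬, IsSupport 𝔓 Q (Ssupp Q))
    (XQ : PcM 𝔓 → L0c 𝔓)
    (hpair : ∀ Q ∈ 𝒬, ∀ Q' ∈ 𝒬,
      L0c.mulInd (Ssupp Q ∩ Ssupp Q') (XQ Q) = L0c.mulInd (Ssupp Q ∩ Ssupp Q') (XQ Q'))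
    (hbdd : ∃ Y : L0c 𝔓, ∀ Q ∈ 𝒬, qsLe (L0c.mulInd (Ssupp Q) (XQ Q).abs) Y) :
    ∃ X : L0c 𝔓, ∀ Q ∈ 𝒬, jQ Q X = jQ Q (XQ Q) := by
  obtain ⟨Y, hY⟩ := hbdd
  obtain ⟨ℓ, hℓ⟩ := exists_ae_eq_of_pairwise_coherent hDC h𝒬 (fun Q hQ => (hsupp Q hQ).2.1)
    (x := fun Q => (XQ Q).out) (y := Y.out)
    (fun Q hQ Q' hQ' => L0c.mulInd_eq_mulInd_iff.1 (hpair Q hQ Q' hQ'))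
    (fun Q hQ => L0c.qsLe_mk_iff_qsLe_out.1 <| by
      simpa only [L0c.mulInd_abs_eq_mk_indicator_abs_out] using hY Q hQ)
  refine ⟨Quotient.mk _ ℓ, fun Q hQ => ?_⟩
  rw [← Quotient.out_eq (XQ Q)]
  exact Quotient.sound (hℓ Q hQ)

theorem pairwise_coherent_aggregation {Ω : Type*} [MeasurableSpace Ω]
    (𝔓 : Set (Measure Ω)) (h𝔓 : 𝔓.Nonempty) (hprob : ∀ P ∈ 𝔓, IsProbabilityMeasure P)
    (hDC : ∀ D : Set (L0c 𝔓), D.Nonempty → (∃ b, ∀ x ∈ D, qsLe x b) →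
      ∃ l, (∀ x ∈ D, qsLe x l) ∧ ∀ u, (∀ x ∈ D, qsLe x u) → qsLe l u)
    (𝒬 : Set (PcM 𝔓)) (h𝒬 : 𝒬.Nonempty)
    (Ssupp : PcM 𝔓 → Set Ω) (hsupp : ∀ Q ∈ 𝒬, IsSupport 𝔓 Q (Ssupp Q))
    (XQ : PcM 𝔓 → L0c 𝔓)
    (hpair : ∀ Q ∈ 𝒬, ∀ Q' ∈ 𝒬,
      L0c.mulInd (Ssupp Q ∩ Ssupp Q') (XQ Q) = L0c.mulInd (Ssupp Q ∩ Ssupp Q') (XQ Q'))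
    (hbdd : ∃ Y : L0c 𝔓, ∀ Q ∈ 𝒬, qsLe (L0c.mulInd (Ssupp Q) (XQ Q).abs) Y) :
    ∃ X : L0c 𝔓, ∀ Q ∈ 𝒬, jQ Q X = jQ Q (XQ Q) :=
  pairwise_coherent_aggregation_general 𝔓 hDC 𝒬 h𝒬 Ssupp hsupp XQ hpair hbdd
end

section
/- Let ρ : L^∞_c → ℝ be a monetary risk measure (monotone and cash-additive) with acceptance set 𝒜_ρ = {X : ρ(X) ≤ 0}, and Q ∈ 𝔓_c(Ω). Define ρ^Q_E(X) := inf{ρ(Y) : Y ∈ L^∞_c, j_Q(Y)=j_Q(X)}. Then the following are equivalent: (i) ρ^Q_E is a real-valued monetary risk measure; (ii) ρ^Q_E(0) ∈ ℝ; (iii) sup{m ∈ ℝ : the constant m lies in j_Q(𝒜_ρ)} < ∞. -/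
open MeasureTheory Filter Set

variable {Ω : Type*} [MeasurableSpace Ω]

/-- `ρ^Q_E(X) = inf { ρ(Y) : Y ∈ L^∞_c, j_Q(Y) = j_Q(X) }`, valued in `[-∞,∞]`. -/
noncomputable def rhoQE {Ω : Type*} [MeasurableSpace Ω] {𝔓 : Set (Measure Ω)}
    (ρ : L0c 𝔓 → ℝ) (Q : PcM 𝔓) (X : L0c 𝔓) : EReal :=
  ⨅ Y ∈ {Y | Y ∈ Linftyc 𝔓 ∧ jQ Q Y = jQ Q X}, (ρ Y : EReal)

/-!
Translation by a constant `m` maps the fibre `{Y ∈ L^∞_c : j_Q Y = j_Q X}` bijectively onto the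
fibre of `X + m`, so `ρ^Q_E` inherits cash additivity from `ρ`. It inherits monotonicity because
for `X ≼ Y` and `Z` in the fibre of `Y`, the element `Z + X - Y` lies in the fibre of `X` and is
dominated by `Z`. Always `ρ^Q_E(X) ≤ ρ(X) < ∞`, and `|X| ≤ b` gives
`ρ^Q_E(0) ≤ ρ^Q_E(X + b) = ρ^Q_E(X) + b`, so finiteness of `ρ^Q_E(0)` excludes the value `-∞`
everywhere. Finally, cash additivity identifies `ρ^Q_E(0)` with `-sup {m : m ∈ j_Q(𝒜_ρ)}`.
-/

namespace EReal

noncomputable def addCoeOrderIso (m : ℝ) : EReal ≃o EReal where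
  toFun x := x + m
  invFun x := x - m
  left_inv _ := add_sub_cancel_right
  right_inv _ := sub_add_cancel
  map_rel_iff' := (addLECancellable_coe m).add_le_add_iff_right

end EReal

variable {𝔓 : Set (Measure Ω)}

namespace L0c

theorem const_mem_Linftyc (m : ℝ) : L0c.const 𝔓 m ∈ Linftyc 𝔓 :=
  ⟨|m| + 1, by positivity, fun _ _ => Eventually.of_forall fun _ => (lt_add_one |m|).le⟩

theorem add_mem_Linftyc {X Y : L0c 𝔓} (hX : X ∈ Linftyc 𝔓) (hY : Y ∈ Linftyc 𝔓) :
    X.add Y ∈ Linftyc 𝔓 := by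
  induction X using Quotient.inductionOn
  induction Y using Quotient.inductionOn
  obtain ⟨a, ha, hXa⟩ := hX
  obtain ⟨b, hb, hYb⟩ := hY
  refine ⟨a + b, by positivity, fun P hP => ?_⟩
  filter_upwards [hXa P hP, hYb P hP] with ω hx hy
  exact (abs_add_le _ _).trans (add_le_add hx hy)

theorem smul_mem_Linftyc (c : ℝ) {X : L0c 𝔓} (hX : X ∈ Linftyc 𝔓) :
    X.smul c ∈ Linftyc 𝔓 := by
  induction X using Quotient.inductionOn
  obtain ⟨a, ha, hXa⟩ := hX
  refine ⟨(|c| + 1) * a, by positivity, fun P hP => ?_⟩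
  filter_upwards [hXa P hP] with ω hx
  rw [abs_mul]
  exact mul_le_mul (lt_add_one _).le hx (abs_nonneg _) (by positivity)

theorem const_add_const (a b : ℝ) :
    (L0c.const 𝔓 a).add (L0c.const 𝔓 b) = L0c.const 𝔓 (a + b) :=
  rfl

theorem add_const_add_const_neg (X : L0c 𝔓) (m : ℝ) :
    (X.add (L0c.const 𝔓 m)).add (L0c.const 𝔓 (-m)) = X := by
  induction X using Quotient.inductionOn
  exact congrArg (Quotient.mk _) (funext fun _ => add_neg_cancel_right _ _)

theorem qsLe_const_zero_add_const {X : L0c 𝔓} {b : ℝ} (h : qsLe X.abs (L0c.const 𝔓 b)) :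
    qsLe (L0c.const 𝔓 0) (X.add (L0c.const 𝔓 b)) := by
  induction X using Quotient.inductionOn
  intro P hP
  filter_upwards [h P hP] with ω hx
  linarith [(abs_le.1 hx).1]

end L0c

open L0c

theorem jQ_mk_eq_mk_iff (Q : PcM 𝔓) (x y : Ω → ℝ) :
    jQ Q (Quotient.mk (qsSetoid 𝔓) x) = jQ Q (Quotient.mk (qsSetoid 𝔓) y) ↔ x =ᵐ[Q.1] y :=
  Quotient.eq

theorem jQ_add_const_congr {Q : PcM 𝔓} {X Y : L0c 𝔓} (h : jQ Q X = jQ Q Y) (m : ℝ) :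
    jQ Q (X.add (L0c.const 𝔓 m)) = jQ Q (Y.add (L0c.const 𝔓 m)) := by
  induction X using Quotient.inductionOn
  induction Y using Quotient.inductionOn
  refine (jQ_mk_eq_mk_iff Q _ _).2 ?_
  filter_upwards [(jQ_mk_eq_mk_iff Q _ _).1 h] with ω hω
  simp only [hω]

theorem jQ_add_const_eq_const {Q : PcM 𝔓} {X : L0c 𝔓} {a : ℝ}
    (h : jQ Q X = jQ Q (L0c.const 𝔓 a)) (b : ℝ) :
    jQ Q (X.add (L0c.const 𝔓 b)) = jQ Q (L0c.const 𝔓 (a + b)) := by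
  rw [jQ_add_const_congr h b, const_add_const]

def linftyFiber (Q : PcM 𝔓) (X : L0c 𝔓) : Set (L0c 𝔓) :=
  {Y | Y ∈ Linftyc 𝔓 ∧ jQ Q Y = jQ Q X}

def acceptanceSet (ρ : L0c 𝔓 → ℝ) : Set (L0c 𝔓) :=
  {X | X ∈ Linftyc 𝔓 ∧ ρ X ≤ 0}

theorem linftyFiber_add_const (Q : PcM 𝔓) (X : L0c 𝔓) (m : ℝ) :
    linftyFiber Q (X.add (L0c.const 𝔓 m)) = (·.add (L0c.const 𝔓 m)) '' linftyFiber Q X := by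
  ext Z
  constructor
  · rintro ⟨hZ, hj⟩
    refine ⟨Z.add (L0c.const 𝔓 (-m)), ⟨add_mem_Linftyc hZ (const_mem_Linftyc _), ?_⟩,
      by simpa only [neg_neg] using add_const_add_const_neg Z (-m)⟩
    rw [jQ_add_const_congr hj, add_const_add_const_neg]
  · rintro ⟨Y, ⟨hY, hj⟩, rfl⟩
    exact ⟨add_mem_Linftyc hY (const_mem_Linftyc m), jQ_add_const_congr hj m⟩

theorem exists_mem_linftyFiber_qsLe {Q : PcM 𝔓} {X Y Z : L0c 𝔓} (hX : X ∈ Linftyc 𝔓)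
    (hY : Y ∈ Linftyc 𝔓) (hXY : qsLe X Y) (hZ : Z ∈ linftyFiber Q Y) :
    ∃ W ∈ linftyFiber Q X, qsLe W Z := by
  obtain ⟨hZ, hj⟩ := hZ
  refine ⟨Z.add (X.add (Y.smul (-1))),
    ⟨add_mem_Linftyc hZ (add_mem_Linftyc hX (smul_mem_Linftyc _ hY)), ?_⟩, ?_⟩
  all_goals
    induction X using Quotient.inductionOn
    induction Y using Quotient.inductionOn
    induction Z using Quotient.inductionOn
  · refine (jQ_mk_eq_mk_iff Q _ _).2 ?_
    filter_upwards [(jQ_mk_eq_mk_iff Q _ _).1 hj] with ω hω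
    rw [hω]
    ring
  · intro P hP
    filter_upwards [hXY P hP] with ω hω
    linarith

section rhoQE

variable {ρ : L0c 𝔓 → ℝ} {Q : PcM 𝔓}

theorem rhoQE_le {X Y : L0c 𝔓} (hY : Y ∈ linftyFiber Q X) : rhoQE ρ Q X ≤ ρ Y :=
  iInf₂_le Y hY

theorem le_rhoQE {X : L0c 𝔓} {c : EReal} (h : ∀ Y ∈ linftyFiber Q X, c ≤ ρ Y) :
    c ≤ rhoQE ρ Q X :=
  le_iInf₂ h

theorem rhoQE_ne_top {X : L0c 𝔓} (hX : X ∈ Linftyc 𝔓) : rhoQE ρ Q X ≠ ⊤ :=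
  ne_top_of_le_ne_top (EReal.coe_ne_top _) (rhoQE_le ⟨hX, rfl⟩)

theorem rhoQE_add_const (hcash : ∀ X ∈ Linftyc 𝔓, ∀ m : ℝ, ρ (X.add (L0c.const 𝔓 m)) = ρ X + m)
    (X : L0c 𝔓) (m : ℝ) : rhoQE ρ Q (X.add (L0c.const 𝔓 m)) = rhoQE ρ Q X + m :=
  calc rhoQE ρ Q (X.add (L0c.const 𝔓 m))
      = ⨅ Y ∈ linftyFiber Q X, (ρ (Y.add (L0c.const 𝔓 m)) : EReal) := by
        rw [rhoQE, ← linftyFiber, linftyFiber_add_const, iInf_image]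
    _ = ⨅ Y ∈ linftyFiber Q X, EReal.addCoeOrderIso m (ρ Y) :=
        iInf_congr fun Y => iInf_congr fun hY => by rw [hcash Y hY.1 m, EReal.coe_add]; rfl
    _ = rhoQE ρ Q X + m := (OrderIso.map_iInf₂ _ _).symm

theorem rhoQE_mono (hmono : ∀ X ∈ Linftyc 𝔓, ∀ Y ∈ Linftyc 𝔓, qsLe X Y → ρ X ≤ ρ Y)
    {X Y : L0c 𝔓} (hX : X ∈ Linftyc 𝔓) (hY : Y ∈ Linftyc 𝔓) (hXY : qsLe X Y) :
    rhoQE ρ Q X ≤ rhoQE ρ Q Y :=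
  le_rhoQE fun Z hZ =>
    let ⟨W, hW, hWZ⟩ := exists_mem_linftyFiber_qsLe hX hY hXY hZ
    (rhoQE_le hW).trans (EReal.coe_le_coe_iff.2 (hmono W hW.1 Z hZ.1 hWZ))

theorem rhoQE_ne_bot (hmono : ∀ X ∈ Linftyc 𝔓, ∀ Y ∈ Linftyc 𝔓, qsLe X Y → ρ X ≤ ρ Y)
    (hcash : ∀ X ∈ Linftyc 𝔓, ∀ m : ℝ, ρ (X.add (L0c.const 𝔓 m)) = ρ X + m)
    (h0 : rhoQE ρ Q (L0c.const 𝔓 0) ≠ ⊥) {X : L0c 𝔓} (hX : X ∈ Linftyc 𝔓) :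
    rhoQE ρ Q X ≠ ⊥ := by
  obtain ⟨b, -, hb⟩ := id hX
  intro hbot
  have h := rhoQE_mono (Q := Q) hmono (const_mem_Linftyc 0)
    (add_mem_Linftyc hX (const_mem_Linftyc b)) (qsLe_const_zero_add_const hb)
  rw [rhoQE_add_const hcash, hbot, EReal.bot_add, le_bot_iff] at h
  exact h0 h

theorem rhoQE_const_zero_eq_neg_sSup
    (hcash : ∀ X ∈ Linftyc 𝔓, ∀ m : ℝ, ρ (X.add (L0c.const 𝔓 m)) = ρ X + m) :
    rhoQE ρ Q (L0c.const 𝔓 0) =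
      -sSup ((fun m : ℝ => (m : EReal)) ''
        {m : ℝ | jQ Q (L0c.const 𝔓 m) ∈ jQ Q '' acceptanceSet ρ}) := by
  apply le_antisymm
  · rw [EReal.le_neg]
    refine sSup_le ?_
    rintro _ ⟨m, ⟨X, ⟨hX, hρX⟩, hXm⟩, rfl⟩
    rw [EReal.le_neg, ← EReal.coe_neg]
    refine (rhoQE_le ⟨add_mem_Linftyc hX (const_mem_Linftyc (-m)), ?_⟩).trans ?_
    · rw [jQ_add_const_eq_const hXm, add_neg_cancel]
    · rw [hcash X hX, EReal.coe_le_coe_iff]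
      linarith
  · refine le_rhoQE fun Y ⟨hY, hj⟩ => EReal.neg_le.2 (le_sSup ⟨-ρ Y, ?_, EReal.coe_neg _⟩)
    refine ⟨Y.add (L0c.const 𝔓 (-ρ Y)), ⟨add_mem_Linftyc hY (const_mem_Linftyc _), ?_⟩, ?_⟩
    · rw [hcash Y hY, add_neg_cancel]
    · rw [jQ_add_const_eq_const hj, zero_add]

end rhoQE

theorem rhoQE_relevant_tfae_general {Ω : Type*} [MeasurableSpace Ω]
    (𝔓 : Set (Measure Ω))
    (ρ : L0c 𝔓 → ℝ)
    (hmono : ∀ X ∈ Linftyc 𝔓, ∀ Y ∈ Linftyc 𝔓, qsLe X Y → ρ X ≤ ρ Y)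
    (hcash : ∀ X ∈ Linftyc 𝔓, ∀ m : ℝ, ρ (X.add (L0c.const 𝔓 m)) = ρ X + m)
    (Q : PcM 𝔓) :
    (((∀ X ∈ Linftyc 𝔓, rhoQE ρ Q X ≠ ⊤ ∧ rhoQE ρ Q X ≠ ⊥) ∧
      (∀ X ∈ Linftyc 𝔓, ∀ Y ∈ Linftyc 𝔓, qsLe X Y → rhoQE ρ Q X ≤ rhoQE ρ Q Y) ∧
      (∀ X ∈ Linftyc 𝔓, ∀ m : ℝ,
        rhoQE ρ Q (X.add (L0c.const 𝔓 m)) = rhoQE ρ Q X + (m : EReal))) ↔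
      (rhoQE ρ Q (L0c.const 𝔓 0) ≠ ⊤ ∧ rhoQE ρ Q (L0c.const 𝔓 0) ≠ ⊥)) ∧
    ((rhoQE ρ Q (L0c.const 𝔓 0) ≠ ⊤ ∧ rhoQE ρ Q (L0c.const 𝔓 0) ≠ ⊥) ↔
      sSup ((fun m : ℝ => (m : EReal)) ''
        {m : ℝ | jQ Q (L0c.const 𝔓 m) ∈ jQ Q '' {X | X ∈ Linftyc 𝔓 ∧ ρ X ≤ 0}}) < ⊤) := by
  have h0 : L0c.const 𝔓 0 ∈ Linftyc 𝔓 := const_mem_Linftyc 0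
  refine ⟨⟨fun h => h.1 _ h0, fun h => ⟨?_, ?_, ?_⟩⟩, ?_⟩
  · exact fun X hX => ⟨rhoQE_ne_top hX, rhoQE_ne_bot hmono hcash h.2 hX⟩
  · exact fun X hX Y hY => rhoQE_mono hmono hX hY
  · exact fun X _ => rhoQE_add_const hcash X
  · rw [and_iff_right (rhoQE_ne_top h0), rhoQE_const_zero_eq_neg_sSup hcash, Ne,
      EReal.neg_eq_bot_iff, lt_top_iff_ne_top]
    rfl

theorem rhoQE_relevant_tfae {Ω : Type*} [MeasurableSpace Ω]
    (𝔓 : Set (Measure Ω)) (h𝔓 : 𝔓.Nonempty) (hprob : ∀ P ∈ 𝔓, IsProbabilityMeasure P)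
    (ρ : L0c 𝔓 → ℝ)
    (hmono : ∀ X ∈ Linftyc 𝔓, ∀ Y ∈ Linftyc 𝔓, qsLe X Y → ρ X ≤ ρ Y)
    (hcash : ∀ X ∈ Linftyc 𝔓, ∀ m : ℝ, ρ (X.add (L0c.const 𝔓 m)) = ρ X + m)
    (Q : PcM 𝔓) :
    (((∀ X ∈ Linftyc 𝔓, rhoQE ρ Q X ≠ ⊤ ∧ rhoQE ρ Q X ≠ ⊥) ∧
      (∀ X ∈ Linftyc 𝔓, ∀ Y ∈ Linftyc 𝔓, qsLe X Y → rhoQE ρ Q X ≤ rhoQE ρ Q Y) ∧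
      (∀ X ∈ Linftyc 𝔓, ∀ m : ℝ,
        rhoQE ρ Q (X.add (L0c.const 𝔓 m)) = rhoQE ρ Q X + (m : EReal))) ↔
      (rhoQE ρ Q (L0c.const 𝔓 0) ≠ ⊤ ∧ rhoQE ρ Q (L0c.const 𝔓 0) ≠ ⊥)) ∧
    ((rhoQE ρ Q (L0c.const 𝔓 0) ≠ ⊤ ∧ rhoQE ρ Q (L0c.const 𝔓 0) ≠ ⊥) ↔
      sSup ((fun m : ℝ => (m : EReal)) ''
        {m : ℝ | jQ Q (L0c.const 𝔓 m) ∈ jQ Q '' {X | X ∈ Linftyc 𝔓 ∧ ρ X ≤ 0}}) < ⊤) :=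
  rhoQE_relevant_tfae_general 𝔓 ρ hmono hcash Q
end

section
/- Suppose S satisfies NA(𝒫,S). Then for every X ∈ L^∞_c the superhedging price π(X|S) := inf{r ∈ ℝ : ∃H ∈ ℝ^d, X ≼ r + [HΔS]_c} is finite (π(X|S) > −∞) and attained: there exists H ∈ ℝ^d with X ≼ π(X|S) + [HΔS]_c. -/
open MeasureTheory Filter Set

variable {Ω : Type*} [MeasurableSpace Ω]

/-- A one-period market model of dimension `d`: initial prices `S0 ∈ ℝ^d` and a
bounded, measurable, nonnegative terminal price vector `S1`. -/
structure MarketModel (Ω : Type*) [MeasurableSpace Ω] (d : ℕ) where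
  S0 : Fin d → ℝ
  S1 : Ω → Fin d → ℝ
  meas : Measurable S1
  bdd : ∃ M : ℝ, ∀ ω i, |S1 ω i| ≤ M
  nonneg0 : ∀ i, 0 ≤ S0 i
  nonneg1 : ∀ ω i, 0 ≤ S1 ω i

/-- The gain `H ΔS = ∑ i, H i (S1 i − S0 i)` of a strategy `H ∈ ℝ^d`. -/
def payoff {Ω : Type*} [MeasurableSpace Ω] {d : ℕ} (S : MarketModel Ω d)
    (H : Fin d → ℝ) (ω : Ω) : ℝ :=
  ∑ i, H i * (S.S1 ω i - S.S0 i)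

/-- The class `[H ΔS]_c` in `L⁰_c`. -/
def payoffC {Ω : Type*} [MeasurableSpace Ω] (𝔓 : Set (Measure Ω)) {d : ℕ}
    (S : MarketModel Ω d) (H : Fin d → ℝ) : L0c 𝔓 :=
  Quotient.mk (qsSetoid 𝔓) (payoff S H)

/-- The robust no-arbitrage condition `NA(𝔓, S)`. -/
def NArob {Ω : Type*} [MeasurableSpace Ω] (𝔓 : Set (Measure Ω)) {d : ℕ}
    (S : MarketModel Ω d) : Prop :=
  ∀ H : Fin d → ℝ, (∀ P ∈ 𝔓, ∀ᵐ ω ∂P, 0 ≤ payoff S H ω) →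
    ∀ P ∈ 𝔓, ∀ᵐ ω ∂P, payoff S H ω = 0

/-- The no-arbitrage condition `NA(P, S)` under a single probability `P`. -/
def NAone {Ω : Type*} [MeasurableSpace Ω] (P : Measure Ω) {d : ℕ}
    (S : MarketModel Ω d) : Prop :=
  ∀ H : Fin d → ℝ, (∀ᵐ ω ∂P, 0 ≤ payoff S H ω) → ∀ᵐ ω ∂P, payoff S H ω = 0

/-- The `𝔓`-superhedging functional, valued in `[-∞,∞]`. -/
noncomputable def piE {Ω : Type*} [MeasurableSpace Ω] (𝔓 : Set (Measure Ω)) {d : ℕ}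
    (S : MarketModel Ω d) (X : L0c 𝔓) : EReal :=
  sInf ((fun r : ℝ => (r : EReal)) ''
    {r : ℝ | ∃ H : Fin d → ℝ, qsLe X ((L0c.const 𝔓 r).add (payoffC 𝔓 S H))})

/-!
Strategies with `𝔓`-q.s. vanishing gain form a subspace `V` of `ℝ^d`; fix a complement `W`.
By `NA(𝔓,S)`, the strategies in `W` whose gain is bounded below by a fixed random variable
form a bounded set: otherwise normalising an unbounded sequence and passing to a limit on the
compact unit sphere of `W` gives a nonzero `G ∈ W` with `GΔS ≥ 0` q.s., hence `G ∈ V`.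
Every superhedging strategy can be replaced by its `W`-component, so along a convergent
sequence of superhedging prices the strategies stay bounded and a subsequence converges;
the limit superhedges at the limit price. Thus the set of superhedging prices is closed, and
`NA(𝔓,S)` bounds it below by the lower bound of `X`, so its infimum is attained.
-/

open Topology

section Superhedging

variable {d : ℕ} (S : MarketModel Ω d)

@[simp]
lemma payoff_zero (ω : Ω) : payoff S 0 ω = 0 := by
  simp [payoff]

lemma payoff_add (H G : Fin d → ℝ) (ω : Ω) :
    payoff S (H + G) ω = payoff S H ω + payoff S G ω := by
  simp [payoff, add_mul, Finset.sum_add_distrib]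

lemma payoff_smul (c : ℝ) (H : Fin d → ℝ) (ω : Ω) :
    payoff S (c • H) ω = c * payoff S H ω := by
  simp [payoff, Finset.mul_sum, mul_assoc]

lemma continuous_payoff (ω : Ω) : Continuous fun H : Fin d → ℝ => payoff S H ω := by
  unfold payoff
  fun_prop

def nullStrategies (𝔓 : Set (Measure Ω)) : Submodule ℝ (Fin d → ℝ) where
  carrier := {G | ∀ P ∈ 𝔓, ∀ᵐ ω ∂P, payoff S G ω = 0}
  add_mem' ha hb P hP := by
    filter_upwards [ha P hP, hb P hP] with ω h1 h2
    rw [payoff_add, h1, h2, add_zero]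
  zero_mem' _ _ := ae_of_all _ (payoff_zero S)
  smul_mem' c _ ha P hP := by
    filter_upwards [ha P hP] with ω h
    rw [payoff_smul, h, mul_zero]

def IsSuperhedge (𝔓 : Set (Measure Ω)) (x : Ω → ℝ) (r : ℝ) (H : Fin d → ℝ) : Prop :=
  ∀ P ∈ 𝔓, ∀ᵐ ω ∂P, x ω ≤ r + payoff S H ω

def superhedgePrices (𝔓 : Set (Measure Ω)) (x : Ω → ℝ) : Set ℝ :=
  {r | ∃ H, IsSuperhedge S 𝔓 x r H}

variable {S} {𝔓 : Set (Measure Ω)}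

lemma IsSuperhedge.of_add_null {x : Ω → ℝ} {r : ℝ} {v w : Fin d → ℝ}
    (h : IsSuperhedge S 𝔓 x r (v + w)) (hv : v ∈ nullStrategies S 𝔓) :
    IsSuperhedge S 𝔓 x r w := fun P hP => by
  filter_upwards [h P hP, hv P hP] with ω h1 h2
  rwa [payoff_add, h2, zero_add] at h1

lemma IsSuperhedge.of_tendsto {x : Ω → ℝ} {r : ℕ → ℝ} {H : ℕ → Fin d → ℝ} {r₀ : ℝ}
    {H₀ : Fin d → ℝ} (h : ∀ n, IsSuperhedge S 𝔓 x (r n) (H n))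
    (hr : Tendsto r atTop (𝓝 r₀)) (hH : Tendsto H atTop (𝓝 H₀)) :
    IsSuperhedge S 𝔓 x r₀ H₀ := fun P hP => by
  filter_upwards [ae_all_iff.2 fun n => h n P hP] with ω hω
  exact ge_of_tendsto' (hr.add (((continuous_payoff S ω).tendsto H₀).comp hH)) hω

lemma ae_payoff_nonneg_of_tendsto {P : Measure Ω} {f : Ω → ℝ} {t : ℕ → ℝ}
    {H : ℕ → Fin d → ℝ} {G : Fin d → ℝ} (hH : ∀ n, ∀ᵐ ω ∂P, f ω ≤ payoff S (H n) ω)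
    (ht : Tendsto t atTop atTop) (hG : Tendsto (fun n => (t n)⁻¹ • H n) atTop (𝓝 G)) :
    ∀ᵐ ω ∂P, 0 ≤ payoff S G ω := by
  filter_upwards [ae_all_iff.2 hH] with ω hω
  have hlim : Tendsto (fun n => (t n)⁻¹ * f ω) atTop (𝓝 0) := by
    simpa using (tendsto_inv_atTop_zero.comp ht).mul_const (f ω)
  refine le_of_tendsto_of_tendsto hlim (((continuous_payoff S ω).tendsto G).comp hG) ?_
  filter_upwards [ht.eventually_gt_atTop 0] with n hn
  simp only [Function.comp_apply, payoff_smul]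
  exact mul_le_mul_of_nonneg_left (hω n) (inv_nonneg.2 hn.le)

theorem NArob.exists_norm_le_of_disjoint (hNA : NArob 𝔓 S) {W : Submodule ℝ (Fin d → ℝ)}
    (hW : Disjoint (nullStrategies S 𝔓) W) (f : Ω → ℝ) :
    ∃ C, ∀ H ∈ W, (∀ P ∈ 𝔓, ∀ᵐ ω ∂P, f ω ≤ payoff S H ω) → ‖H‖ ≤ C := by
  by_contra! h
  choose H hHW hHf hHlarge using fun n : ℕ => h n
  have ht : Tendsto (fun n => ‖H n‖) atTop atTop :=
    tendsto_atTop_mono (fun n => (hHlarge n).le) tendsto_natCast_atTop_atTop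
  have hsphere : ∀ n, ‖H n‖⁻¹ • H n ∈ Metric.sphere (0 : Fin d → ℝ) 1 ∩ W := fun n =>
    ⟨by rw [mem_sphere_zero_iff_norm, norm_smul, norm_inv, norm_norm,
        inv_mul_cancel₀ (n.cast_nonneg.trans_lt (hHlarge n)).ne'],
      W.smul_mem _ (hHW n)⟩
  obtain ⟨G, ⟨hG1, hGW⟩, φ, hφ, hGlim⟩ :=
    ((isCompact_sphere 0 1).inter_right W.closed_of_finiteDimensional).tendsto_subseq hsphere
  have hGnull : G ∈ nullStrategies S 𝔓 := hNA G fun P hP =>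
    ae_payoff_nonneg_of_tendsto (fun n => hHf (φ n) P hP) (ht.comp hφ.tendsto_atTop) hGlim
  have hG0 : G = 0 := Submodule.disjoint_def.1 hW G hGnull hGW
  simp [hG0] at hG1

theorem NArob.isClosed_superhedgePrices (hNA : NArob 𝔓 S) (x : Ω → ℝ) :
    IsClosed (superhedgePrices S 𝔓 x) := by
  obtain ⟨W, hVW⟩ := (nullStrategies S 𝔓).exists_isCompl
  refine isClosed_of_closure_subset fun r₀ hr₀ => ?_
  obtain ⟨r, hrR, hr⟩ := mem_closure_iff_seq_limit.1 hr₀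
  choose H hH using hrR
  choose v w hv hw hvw using fun n =>
    Submodule.codisjoint_iff_exists_add_eq.1 hVW.codisjoint (H n)
  have hwhedge : ∀ n, IsSuperhedge S 𝔓 x (r n) (w n) := fun n =>
    (hvw n ▸ hH n).of_add_null (hv n)
  obtain ⟨b, hb⟩ := hr.bddAbove_range
  obtain ⟨C, hC⟩ := hNA.exists_norm_le_of_disjoint hVW.disjoint fun ω => x ω - b
  have hwC : ∀ n, w n ∈ Metric.closedBall 0 C := fun n =>
    mem_closedBall_zero_iff.2 <| hC _ (hw n) fun P hP => by
      filter_upwards [hwhedge n P hP] with ω hω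
      linarith [hb ⟨n, rfl⟩]
  obtain ⟨H₀, -, φ, hφ, hH₀⟩ := tendsto_subseq_of_bounded Metric.isBounded_closedBall hwC
  exact ⟨H₀, .of_tendsto (fun n => hwhedge (φ n)) (hr.comp hφ.tendsto_atTop) hH₀⟩

theorem NArob.bddBelow_superhedgePrices (hNA : NArob 𝔓 S) {P₀ : Measure Ω} (hP₀ : P₀ ∈ 𝔓)
    [NeZero P₀] {x : Ω → ℝ} {m : ℝ} (hx : ∀ P ∈ 𝔓, ∀ᵐ ω ∂P, m ≤ x ω) :
    BddBelow (superhedgePrices S 𝔓 x) := by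
  refine ⟨m, fun r ⟨H, hH⟩ => not_lt.1 fun hr => ?_⟩
  have hpos : ∀ P ∈ 𝔓, ∀ᵐ ω ∂P, 0 ≤ payoff S H ω := fun P hP => by
    filter_upwards [hH P hP, hx P hP] with ω h1 h2
    linarith
  obtain ⟨ω, ⟨h1, h2⟩, h3⟩ := (((hH P₀ hP₀).and (hx P₀ hP₀)).and (hNA H hpos P₀ hP₀)).exists
  linarith

end Superhedging

theorem superhedging_price_attained {Ω : Type*} [MeasurableSpace Ω]
    (𝔓 : Set (Measure Ω)) (h𝔓 : 𝔓.Nonempty) (hprob : ∀ P ∈ 𝔓, IsProbabilityMeasure P)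
    (d : ℕ) (S : MarketModel Ω d) (hNA : NArob 𝔓 S) :
    ∀ X ∈ Linftyc 𝔓,
      {r : ℝ | ∃ H : Fin d → ℝ, qsLe X ((L0c.const 𝔓 r).add (payoffC 𝔓 S H))}.Nonempty ∧
      BddBelow {r : ℝ | ∃ H : Fin d → ℝ, qsLe X ((L0c.const 𝔓 r).add (payoffC 𝔓 S H))} ∧
      ∃ H : Fin d → ℝ,
        qsLe X ((L0c.const 𝔓
          (sInf {r : ℝ | ∃ H' : Fin d → ℝ,
            qsLe X ((L0c.const 𝔓 r).add (payoffC 𝔓 S H'))})).add (payoffC 𝔓 S H)) := by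
  rintro X ⟨m, -, hm⟩
  obtain ⟨x, rfl⟩ := Quotient.exists_rep X
  have hx : ∀ P ∈ 𝔓, ∀ᵐ ω ∂P, |x ω| ≤ m := hm
  have hmem : m ∈ superhedgePrices S 𝔓 x := ⟨0, fun P hP => by
    filter_upwards [hx P hP] with ω h
    simpa using (abs_le.1 h).2⟩
  obtain ⟨P₀, hP₀⟩ := h𝔓
  have := hprob P₀ hP₀
  have hbdd : BddBelow (superhedgePrices S 𝔓 x) :=
    hNA.bddBelow_superhedgePrices hP₀ fun P hP => (hx P hP).mono fun ω h => (abs_le.1 h).1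
  exact ⟨⟨m, hmem⟩, hbdd, (hNA.isClosed_superhedgePrices x).csInf_mem ⟨m, hmem⟩ hbdd⟩
end
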